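/- arXiv:1610.06836 — 2 statements merged into one kernel-verified Lean document; each statement's English description precedes it below -/
import Mathlib

section
/- Assume (B2) holds. If (q, b) ∈ ℝ × H₀(Δ,Ω) with b ≠ 0 is a solution of the Dirichlet Biharmonic Steklov eigenproblem ∫_Ω Δb Δv dx = q ∫_{∂Ω} (D_ν b)(D_ν v) dσ for all v ∈ H₀(Δ,Ω), then q > 0; that is, all DBS eigenvalues are strictly positive. -/
open MeasureTheory Filter Set Topology
open scoped ENNReal

noncomputable section

/-- Euclidean `N`-space. -/
abbrev Euc (N : ℕ) : Type := EuclideanSpace ℝ (Fin N)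

variable {N : ℕ}


/-- The real inner (dot) product on `Euc N`. -/
def rip {N : ℕ} (a b : Euc N) : ℝ := inner ℝ a b

/-- Lebesgue measure restricted to `Ω`. -/
def volΩ (Ω : Set (Euc N)) : Measure (Euc N) := volume.restrict Ω

/-- The surface measure `σ` on the boundary of `Ω`:
`(N-1)`-dimensional Hausdorff measure restricted to `∂Ω = frontier Ω`. -/
def surf (Ω : Set (Euc N)) : Measure (Euc N) :=
  (μH[(N : ℝ) - 1]).restrict (frontier Ω)

/-- Smooth test functions with compact support contained in `Ω` (the class `C_c^∞(Ω)`). -/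
def IsTestFun (Ω : Set (Euc N)) (φ : Euc N → ℝ) : Prop :=
  ContDiff ℝ (⊤ : ℕ∞) φ ∧ HasCompactSupport φ ∧ tsupport φ ⊆ Ω

/-- The class `C_c²(Ω)` of twice continuously differentiable functions with
compact support contained in `Ω`. -/
def IsCc2Fun (Ω : Set (Euc N)) (φ : Euc N → ℝ) : Prop :=
  ContDiff ℝ 2 φ ∧ HasCompactSupport φ ∧ tsupport φ ⊆ Ω

/-- The `i`-th (classical) partial derivative. -/
def pder (φ : Euc N → ℝ) (i : Fin N) (x : Euc N) : ℝ :=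
  fderiv ℝ φ x (EuclideanSpace.single i 1)

/-- The classical gradient, as a vector in `Euc N`. -/
def clGrad (φ : Euc N → ℝ) (x : Euc N) : Euc N :=
  (WithLp.equiv 2 (Fin N → ℝ)).symm (fun i => pder φ i x)

/-- The classical Laplacian `Δφ = ∑ ∂²φ/∂xᵢ²`. -/
def clLap (φ : Euc N → ℝ) (x : Euc N) : ℝ :=
  ∑ i, pder (pder φ i) i x

/-- `G` is the weak gradient of `u` on `Ω`. -/
def HasWeakGrad (Ω : Set (Euc N)) (u : Euc N → ℝ) (G : Euc N → Euc N) : Prop :=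
  ∀ φ, IsTestFun Ω φ → ∀ i : Fin N,
    ∫ x in Ω, u x * pder φ i x = - ∫ x in Ω, G x i * φ x

/-- `w` is the weak divergence of the vector field `G` on `Ω`. -/
def HasWeakDiv (Ω : Set (Euc N)) (G : Euc N → Euc N) (w : Euc N → ℝ) : Prop :=
  ∀ φ, IsTestFun Ω φ →
    ∫ x in Ω, (∑ i, G x i * pder φ i x) = - ∫ x in Ω, w x * φ x

/-- An element of the Sobolev space `H¹(Ω)`: an `L²` function together with an
`L²` weak gradient. -/
structure H1Fun (Ω : Set (Euc N)) where
  u : Euc N → ℝ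
  grad : Euc N → Euc N
  u_mem : MemLp u 2 (volΩ Ω)
  grad_mem : MemLp grad 2 (volΩ Ω)
  weak_grad : HasWeakGrad Ω u grad

/-- Membership in `H¹₀(Ω)`: `f` is an `H¹`-limit of test functions. -/
def IsH10 {Ω : Set (Euc N)} (f : H1Fun Ω) : Prop :=
  ∃ φ : ℕ → Euc N → ℝ, (∀ n, IsTestFun Ω (φ n)) ∧
    Tendsto (fun n =>
      eLpNorm (fun x => f.u x - φ n x) 2 (volΩ Ω) +
      eLpNorm (fun x => f.grad x - clGrad (φ n) x) 2 (volΩ Ω)) atTop (𝓝 0)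

/-- An `H¹` function is harmonic on `Ω` iff `∫ ∇u·∇v = 0` for all `v ∈ H¹₀(Ω)`. -/
def IsHarmonicH1 {Ω : Set (Euc N)} (f : H1Fun Ω) : Prop :=
  ∀ v : H1Fun Ω, IsH10 v → ∫ x in Ω, rip (f.grad x) (v.grad x) = 0

/-- An element of `H(Δ,Ω)`: an `H¹(Ω)` function whose weak Laplacian is in `L²(Ω)`. -/
structure HDFun (Ω : Set (Euc N)) extends H1Fun Ω where
  lap : Euc N → ℝ
  lap_mem : MemLp lap 2 (volΩ Ω)
  weak_lap : HasWeakDiv Ω grad lap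

/-- An element of `H₀(Δ,Ω) = H(Δ,Ω) ∩ H¹₀(Ω)`. -/
structure H0DFun (Ω : Set (Euc N)) extends HDFun Ω where
  bc : IsH10 toH1Fun

/-- The `Δ`-inner product `[u,v]_Δ = ∫_Ω Δu Δv dx` on `H₀(Δ,Ω)`. -/
def lapIP {Ω : Set (Euc N)} (f g : H0DFun Ω) : ℝ := ∫ x in Ω, f.lap x * g.lap x

/-- The squared `Δ`-norm `‖u‖_Δ² = ∫_Ω |Δu|² dx`. -/
def deltaNormSq {Ω : Set (Euc N)} (f : H0DFun Ω) : ℝ := ∫ x in Ω, (f.lap x) ^ 2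

/-- A function in `H(Δ,Ω)` is weakly biharmonic if `∫_Ω Δb Δφ = 0` for all `φ ∈ C_c²(Ω)`. -/
def IsBiharmonic {Ω : Set (Euc N)} (f : HDFun Ω) : Prop :=
  ∀ φ, IsCc2Fun Ω φ → ∫ x in Ω, f.lap x * clLap φ x = 0

/-- Membership in the harmonic Bergman space `L²_H(Ω)`:
`h ∈ L²(Ω)` and `∫_Ω h Δφ = 0` for all `φ ∈ C_c²(Ω)`. -/
def MemL2H (Ω : Set (Euc N)) (h : Euc N → ℝ) : Prop :=
  MemLp h 2 (volΩ Ω) ∧ ∀ φ, IsCc2Fun Ω φ → ∫ x in Ω, h x * clLap φ x = 0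

/-- `lam` is an eigenvalue of the Dirichlet Laplacian on `Ω`. -/
def IsDirEV (Ω : Set (Euc N)) (lam : ℝ) : Prop :=
  ∃ e : H1Fun Ω, IsH10 e ∧ ¬(e.u =ᵐ[volΩ Ω] (0 : Euc N → ℝ)) ∧
    ∀ v : H1Fun Ω, IsH10 v →
      ∫ x in Ω, rip (e.grad x) (v.grad x) = lam * ∫ x in Ω, e.u x * v.u x

/-- A bounded region satisfying hypothesis (B1), together with the boundary
objects whose existence (B1) guarantees: the outward unit normal `ν`, the
boundary trace operator `γ` on `H¹(Ω)` (characterized by compatibility with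
continuous functions and the Gauss-Green theorem), and the normal derivative
operator `D_ν` on `H₀(Δ,Ω)` (characterized by Green's identity). -/
structure B1Setting (N : ℕ) : Type where
  /-- the region -/
  Ω : Set (Euc N)
  conn : IsConnected Ω
  opn : IsOpen Ω
  bdd : Bornology.IsBounded Ω
  /-- the boundary has finite surface measure -/
  fin_bdry : surf Ω univ < ⊤
  /-- the outward unit normal vector field -/
  ν : Euc N → Euc N
  ν_unit : ∀ᵐ z ∂(surf Ω), ‖ν z‖ = 1
  /-- the boundary trace operator `γ : H¹(Ω) → L²(∂Ω, dσ)` -/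
  trace : H1Fun Ω → Euc N → ℝ
  trace_mem : ∀ f, MemLp (trace f) 2 (surf Ω)
  trace_of_continuous : ∀ f : H1Fun Ω, ContinuousOn f.u (closure Ω) →
    trace f =ᵐ[surf Ω] f.u
  trace_congr : ∀ f g : H1Fun Ω, f.u =ᵐ[volΩ Ω] g.u → trace f =ᵐ[surf Ω] trace g
  trace_zero : ∀ f : H1Fun Ω, IsH10 f → trace f =ᵐ[surf Ω] (0 : Euc N → ℝ)
  /-- the Gauss-Green theorem `∫_Ω u D_i v + ∫_Ω v D_i u = ∫_∂Ω γu γv νᵢ dσ` -/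
  gauss_green : ∀ f g : H1Fun Ω, ∀ i : Fin N,
    (∫ x in Ω, f.u x * g.grad x i) + (∫ x in Ω, g.u x * f.grad x i)
      = ∫ z, trace f z * trace g z * ν z i ∂(surf Ω)
  /-- the normal derivative operator `D_ν` on `H₀(Δ,Ω)` -/
  dnu : H0DFun Ω → Euc N → ℝ
  dnu_mem : ∀ f, MemLp (dnu f) 2 (surf Ω)
  /-- Green's identity `∫_Ω v Δu + ∫_Ω ∇v·∇u = ∫_∂Ω γv D_ν u dσ`,
  characterizing `D_ν u` for `u ∈ H₀(Δ,Ω)` -/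
  green : ∀ (f : H0DFun Ω) (v : H1Fun Ω),
    (∫ x in Ω, v.u x * f.lap x) + (∫ x in Ω, rip (v.grad x) (f.grad x))
      = ∫ z, trace v z * dnu f z ∂(surf Ω)

namespace B1Setting

variable (S : B1Setting N)

/-- the surface area `|∂Ω|` of the boundary -/
def area : ℝ := (surf S.Ω univ).toReal

/-- the `∂`-inner product `[u,v]_∂ = ∫_Ω ∇u·∇v dx + |∂Ω|⁻¹ ∫_∂Ω γu γv dσ` on `H¹(Ω)` -/
def dIP (f g : H1Fun S.Ω) : ℝ :=
  (∫ x in S.Ω, rip (f.grad x) (g.grad x))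
    + (S.area)⁻¹ * ∫ z, S.trace f z * S.trace g z ∂(surf S.Ω)

/-- the squared `(∂,Δ)`-norm on `H₀(Δ,Ω)` -/
def pdNormSq (f : H0DFun S.Ω) : ℝ :=
  S.dIP f.toH1Fun f.toH1Fun + ∫ x in S.Ω, (f.lap x) ^ 2

/-- the functional `M(u) = ∫_∂Ω |D_ν u|² dσ` -/
def bM (f : H0DFun S.Ω) : ℝ := ∫ z, (S.dnu f z) ^ 2 ∂(surf S.Ω)

/-- the Dirichlet Biharmonic Steklov (DBS) eigenproblem: `(q,b)` with `b ≠ 0` and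
`∫_Ω Δb Δv dx = q ∫_∂Ω (D_ν b)(D_ν v) dσ` for all `v ∈ H₀(Δ,Ω)`. -/
def IsDBS (q : ℝ) (b : H0DFun S.Ω) : Prop :=
  ¬(b.u =ᵐ[volΩ S.Ω] (0 : Euc N → ℝ)) ∧
    ∀ v : H0DFun S.Ω,
      ∫ x in S.Ω, b.lap x * v.lap x = q * ∫ z, S.dnu b z * S.dnu v z ∂(surf S.Ω)

/-- Hypothesis (B2): (B1) together with compactness of
`D_ν : H₀(Δ,Ω) → L²(∂Ω, dσ)`. -/
def B2 : Prop :=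
  ∀ f : ℕ → H0DFun S.Ω, (∀ n, S.pdNormSq (f n) ≤ 1) →
    ∃ (k : ℕ → ℕ) (g : Euc N → ℝ), StrictMono k ∧
      Tendsto (fun m => eLpNorm (fun z => S.dnu (f (k m)) z - g z) 2 (surf S.Ω))
        atTop (𝓝 0)

/-- Membership in `H₀₀(Δ,Ω) = {u ∈ H₀(Δ,Ω) : D_ν u = 0 on ∂Ω}`. -/
def IsH00 (f : H0DFun S.Ω) : Prop := S.dnu f =ᵐ[surf S.Ω] (0 : Euc N → ℝ)

/-- Membership in `W = Δ(H₀₀(Δ,Ω)) ⊆ L²(Ω)`. -/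
def MemW (g : Euc N → ℝ) : Prop :=
  ∃ ψ : H0DFun S.Ω, S.IsH00 ψ ∧ g =ᵐ[volΩ S.Ω] ψ.lap

end B1Setting

/-!
Suppose `q ≤ 0`. Testing the eigen-equation with `b` itself gives
`∫ (Δb)² = q ∫ (D_ν b)² ≤ 0`, so `Δb = 0`. Green's identity with `v = b`, whose trace vanishes,
then gives `∫ |∇b|² = 0`. Finally, with `∇b = 0` the function `x₁ b` has weak gradient `b e₁`,
and the Gauss–Green formula for `b` and `x₁ b` reduces to `∫ b² = 0`, contradicting `b ≠ 0`.
-/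

theorem ae_eq_zero_of_integral_norm_sq_eq_zero {α E : Type*} [MeasurableSpace α]
    [NormedAddCommGroup E] {μ : Measure α} {f : α → E} (hf : MemLp f 2 μ)
    (h : ∫ x, ‖f x‖ ^ 2 ∂μ = 0) : f =ᵐ[μ] 0 := by
  filter_upwards [(integral_eq_zero_iff_of_nonneg (fun x => sq_nonneg _)
    hf.norm.integrable_sq).mp h] with x hx
  simpa using hx

theorem ae_eq_zero_of_integral_mul_self_eq_zero {α : Type*} [MeasurableSpace α]
    {μ : Measure α} {f : α → ℝ} (hf : MemLp f 2 μ) (h : ∫ x, f x * f x ∂μ = 0) :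
    f =ᵐ[μ] 0 :=
  ae_eq_zero_of_integral_norm_sq_eq_zero hf (by simpa [← pow_two] using h)

section Calculus

variable {φ ψ : Euc N → ℝ}

@[simp]
theorem clGrad_apply (x : Euc N) (j : Fin N) : clGrad φ x j = pder φ j x := rfl

theorem pder_mul {x : Euc N} (hφ : DifferentiableAt ℝ φ x) (hψ : DifferentiableAt ℝ ψ x)
    (j : Fin N) : pder (fun y => ψ y * φ y) j x = ψ x * pder φ j x + φ x * pder ψ j x := by
  rw [pder, fderiv_fun_mul hψ hφ]
  rfl

theorem pder_coord (i j : Fin N) (x : Euc N) :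
    pder (fun y : Euc N => y i) j x = if i = j then 1 else 0 := by
  change fderiv ℝ (EuclideanSpace.proj (𝕜 := ℝ) i) x _ = _
  rw [ContinuousLinearMap.fderiv]
  simp [PiLp.single_apply]

theorem clGrad_coord (i : Fin N) (x : Euc N) :
    clGrad (fun y : Euc N => y i) x = EuclideanSpace.single i 1 := by
  ext j
  simp [pder_coord, PiLp.single_apply, eq_comm]

theorem continuous_pder (hφ : ContDiff ℝ 1 φ) (j : Fin N) : Continuous (pder φ j) :=
  (hφ.continuous_fderiv one_ne_zero).clm_apply continuous_const

theorem HasCompactSupport.pder (hφ : HasCompactSupport φ) (j : Fin N) :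
    HasCompactSupport (pder φ j) :=
  hφ.fderiv (𝕜 := ℝ) |>.comp_left
    (g := fun L : Euc N →L[ℝ] ℝ => L (EuclideanSpace.single j 1)) rfl

end Calculus

theorem Integrable.mul_continuous_of_hasCompactSupport {X : Type*} [TopologicalSpace X]
    [MeasurableSpace X] [OpensMeasurableSpace X] {μ : Measure X} {f g : X → ℝ}
    (hf : Integrable f μ) (hg : Continuous g) (hgc : HasCompactSupport g) :
    Integrable (fun x => f x * g x) μ :=
  hf.mul_of_top_left (hg.memLp_top_of_hasCompactSupport hgc μ)

theorem HasWeakGrad.contDiff_mul {Ω : Set (Euc N)} {u : Euc N → ℝ} {G : Euc N → Euc N}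
    {ψ : Euc N → ℝ} (h : HasWeakGrad Ω u G) (hu : IntegrableOn u Ω) (hG : IntegrableOn G Ω)
    (hψ : ContDiff ℝ (⊤ : ℕ∞) ψ) :
    HasWeakGrad Ω (fun x => ψ x * u x) (fun x => ψ x • G x + u x • clGrad ψ x) := by
  intro φ hφ j
  have hψ1 : ContDiff ℝ 1 ψ := hψ.of_le (by exact_mod_cast le_top)
  have hφ1 : ContDiff ℝ 1 φ := hφ.1.of_le (by exact_mod_cast le_top)
  have hψφ := h _ ⟨hψ.mul hφ.1, hφ.2.1.mul_left, tsupport_mul_subset_right.trans hφ.2.2⟩ j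
  simp only [pder_mul (hφ1.differentiable one_ne_zero _) (hψ1.differentiable one_ne_zero _),
    mul_add] at hψφ
  have hG_j : IntegrableOn (fun x => G x j) Ω :=
    (EuclideanSpace.proj (𝕜 := ℝ) j).integrable_comp hG
  have i₁ : IntegrableOn (fun x => u x * (ψ x * pder φ j x)) Ω :=
    Integrable.mul_continuous_of_hasCompactSupport hu
      (hψ1.continuous.mul (continuous_pder hφ1 j)) (hφ.2.1.pder j).mul_left
  have i₂ : IntegrableOn (fun x => u x * (φ x * pder ψ j x)) Ω :=
    Integrable.mul_continuous_of_hasCompactSupport hu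
      (hφ1.continuous.mul (continuous_pder hψ1 j)) hφ.2.1.mul_right
  have i₃ : IntegrableOn (fun x => G x j * (ψ x * φ x)) Ω :=
    Integrable.mul_continuous_of_hasCompactSupport hG_j
      (hψ1.continuous.mul hφ1.continuous) hφ.2.1.mul_left
  rw [integral_add i₁ i₂] at hψφ
  simp only [PiLp.add_apply, PiLp.smul_apply, smul_eq_mul, clGrad_apply]
  calc ∫ x in Ω, ψ x * u x * pder φ j x = ∫ x in Ω, u x * (ψ x * pder φ j x) := by
        congr 1; ext x; ring
    _ = -((∫ x in Ω, G x j * (ψ x * φ x)) + ∫ x in Ω, u x * (φ x * pder ψ j x)) := by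
        linarith
    _ = -∫ x in Ω, (ψ x * G x j + u x * pder ψ j x) * φ x := by
        rw [← integral_add i₃ i₂]; congr 2; ext x; ring

section Bounded

variable {Ω : Set (Euc N)}

theorem isFiniteMeasure_volΩ (hb : Bornology.IsBounded Ω) : IsFiniteMeasure (volΩ Ω) :=
  ⟨by simpa [volΩ] using hb.measure_lt_top⟩

theorem memLp_coord_smul {E : Type*} [NormedAddCommGroup E] [NormedSpace ℝ E]
    (hb : Bornology.IsBounded Ω) (hm : MeasurableSet Ω) {g : Euc N → E}
    (hg : MemLp g 2 (volΩ Ω)) (i : Fin N) : MemLp (fun x => x i • g x) 2 (volΩ Ω) := by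
  obtain ⟨C, hC⟩ := isBounded_iff_forall_norm_le.mp hb
  refine hg.smul (memLp_top_of_bound
    (EuclideanSpace.proj (𝕜 := ℝ) i).continuous.aestronglyMeasurable C
    (ae_restrict_of_forall_mem hm fun x hx => ?_))
  exact (PiLp.norm_apply_le x i).trans (hC x hx)

def H1Fun.coordMul (hb : Bornology.IsBounded Ω) (hm : MeasurableSet Ω) (f : H1Fun Ω)
    (i : Fin N) : H1Fun Ω where
  u x := x i * f.u x
  grad x := x i • f.grad x + f.u x • EuclideanSpace.single i 1
  u_mem := memLp_coord_smul hb hm f.u_mem i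
  grad_mem := by
    have h₁ := memLp_coord_smul hb hm f.grad_mem i
    have h₂ : MemLp (fun x => f.u x • EuclideanSpace.single i (1 : ℝ)) 2 (volΩ Ω) :=
      (memLp_top_const _).smul f.u_mem (r := 2)
    exact h₁.add h₂
  weak_grad := by
    have := isFiniteMeasure_volΩ hb
    simpa only [clGrad_coord] using f.weak_grad.contDiff_mul (ψ := fun x => x i)
      (f.u_mem.integrable one_le_two) (f.grad_mem.integrable one_le_two)
      (EuclideanSpace.proj (𝕜 := ℝ) i).contDiff

end Bounded

namespace B1Setting

theorem IsDBS.lap_ae_eq_zero {S : B1Setting N} {q : ℝ} {b : H0DFun S.Ω} (hb : S.IsDBS q b)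
    (hq : q ≤ 0) : b.lap =ᵐ[volΩ S.Ω] 0 := by
  refine ae_eq_zero_of_integral_mul_self_eq_zero b.lap_mem (le_antisymm ?_
    (integral_nonneg fun x => mul_self_nonneg _))
  rw [volΩ, hb.2 b]
  exact mul_nonpos_of_nonpos_of_nonneg hq (integral_nonneg fun z => mul_self_nonneg _)

variable (S : B1Setting N)

theorem u_ae_eq_zero_of_grad_ae_eq_zero (i : Fin N) (f : H1Fun S.Ω)
    (hf : S.trace f =ᵐ[surf S.Ω] 0) (hgrad : f.grad =ᵐ[volΩ S.Ω] 0) :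
    f.u =ᵐ[volΩ S.Ω] 0 := by
  let g := f.coordMul S.bdd S.opn.measurableSet i
  have hgg := S.gauss_green f g i
  have h₁ : ∫ x in S.Ω, f.u x * g.grad x i = ∫ x in S.Ω, f.u x * f.u x := by
    refine integral_congr_ae ?_
    filter_upwards [hgrad] with x hx
    simp [g, H1Fun.coordMul, hx]
  have h₂ : ∫ x in S.Ω, g.u x * f.grad x i = 0 :=
    integral_eq_zero_of_ae (by filter_upwards [hgrad] with x hx; simp [hx])
  have h₃ : ∫ z, S.trace f z * S.trace g z * S.ν z i ∂(surf S.Ω) = 0 :=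
    integral_eq_zero_of_ae (by filter_upwards [hf] with z hz; simp [hz])
  rw [h₁, h₂, h₃, add_zero] at hgg
  exact ae_eq_zero_of_integral_mul_self_eq_zero f.u_mem hgg

theorem grad_ae_eq_zero_of_lap_ae_eq_zero (f : H0DFun S.Ω) (hf : f.lap =ᵐ[volΩ S.Ω] 0) :
    f.grad =ᵐ[volΩ S.Ω] 0 := by
  have hgreen := S.green f f.toH1Fun
  have h₁ : ∫ x in S.Ω, f.u x * f.lap x = 0 :=
    integral_eq_zero_of_ae (by filter_upwards [hf] with x hx; simp [hx])
  have h₂ : ∫ z, S.trace f.toH1Fun z * S.dnu f z ∂(surf S.Ω) = 0 :=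
    integral_eq_zero_of_ae (by
      filter_upwards [S.trace_zero _ f.bc] with z hz; simp [hz])
  rw [h₁, h₂, zero_add] at hgreen
  refine ae_eq_zero_of_integral_norm_sq_eq_zero f.grad_mem ?_
  simpa only [volΩ, rip, real_inner_self_eq_norm_sq] using hgreen

end B1Setting

theorem statement_3_general {N : ℕ} (hN : 2 ≤ N) (S : B1Setting N)
    (q : ℝ) (b : H0DFun S.Ω) (hb : S.IsDBS q b) : 0 < q := by
  by_contra! hq
  have hlap := hb.lap_ae_eq_zero hq
  have hgrad := S.grad_ae_eq_zero_of_lap_ae_eq_zero b hlap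
  have hu := S.u_ae_eq_zero_of_grad_ae_eq_zero ⟨0, by omega⟩ b.toH1Fun
    (S.trace_zero _ b.bc) hgrad
  exact hb.1 hu

/-- under (B2), every DBS eigenvalue is strictly positive. -/
theorem statement_3 {N : ℕ} (hN : 2 ≤ N) (S : B1Setting N) (hB2 : S.B2)
    (q : ℝ) (b : H0DFun S.Ω) (hb : S.IsDBS q b) : 0 < q :=
  statement_3_general hN S q b hb

end
end

section
/- Assume (B2) holds. For finite M ≥ 1 define the rank-M Poisson kernel P_M(x,z) := Σ_{j=1}^M (|∂Ω| q_j)^{-1/2} h_j(x) w_j(z) and the operator E_M g(x) := ∫_{∂Ω} P_M(x,z) g(z) dσ(z). Then for all g ∈ L²(∂Ω, dσ), ‖E_H g − E_M g‖_{L²(Ω)} ≤ √(|∂Ω|/q_{M+1}) · ‖g − g_M‖_{∂Ω}, where g_M := Σ_{j=1}^M ĝ_j w_j with ĝ_j := ⟨g, w_j⟩_{∂Ω} and q_{M+1} is the (M+1)-st DBS eigenvalue. -/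
open MeasureTheory Filter Set Topology
open scoped ENNReal

noncomputable section

variable {N : ℕ}


/-! Write `c_j = |∂Ω|⁻¹ ∫ g w_j` for the boundary coefficients of `g`. The partial sums
`s_K = ∑_{j<K} √(|∂Ω|/q_j) c_j Δb_j` converge to `E_H g` in `L²(Ω)`, and `E_M g = s_M`.
Since the `Δb_j` are orthonormal and `q` is nondecreasing,
`‖s_K - s_M‖² = ∑_{M≤j<K} (|∂Ω|/q_j) c_j² ≤ (|∂Ω|/q_M) ∑_{M≤j<K} c_j²`, and Bessel's inequality
for the orthogonal system `w_j` (with `‖w_j‖² = |∂Ω|` in `L²(∂Ω, dσ)`) bounds the last sum by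
`|∂Ω|⁻¹ ‖g - g_M‖²`. Letting `K → ∞` gives the estimate. Nothing says that `E_H g` is measurable,
so the limit is taken with a triangle inequality in which only one summand is measurable. -/

theorem Real.inv_sqrt_mul_mul_eq_sqrt_div {a : ℝ} (ha : 0 ≤ a) (b : ℝ) :
    (√(a * b))⁻¹ * a = √(a / b) := by
  rw [inv_mul_eq_div, Real.sqrt_mul ha, ← div_div, Real.div_sqrt, Real.sqrt_div ha]

namespace MeasureTheory

variable {α : Type*} [MeasurableSpace α] {μ : Measure α}

section TriangleInequality

variable {E : Type*} [NormedAddCommGroup E] {f g : α → E} {p : ℝ≥0∞} {q : ℝ}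

theorem eLpNorm'_add_le_of_aestronglyMeasurable_right (hg : AEStronglyMeasurable g μ)
    (hq : 1 ≤ q) : eLpNorm' (f + g) q μ ≤ eLpNorm' f q μ + eLpNorm' g q μ := by
  have hq0 : 0 < q := by linarith
  -- the lower Lebesgue integral of `‖f + g‖ₑ ^ q` is attained by a measurable minorant `φ`,
  -- and `φ ^ q⁻¹ - ‖g‖ₑ` is then a measurable minorant of `‖f‖ₑ`
  obtain ⟨φ, hφ, hφle, hφeq⟩ := exists_measurable_le_lintegral_eq μ fun a => ‖(f + g) a‖ₑ ^ q
  set f' : α → ℝ≥0∞ := fun a => φ a ^ q⁻¹ - ‖g a‖ₑ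
  have hf' : AEMeasurable f' μ := (hφ.pow_const _).aemeasurable.sub hg.enorm
  have hf'le (a : α) : f' a ≤ ‖f a‖ₑ := by
    refine tsub_le_iff_right.2 ((ENNReal.rpow_inv_le_iff hq0).2 ((hφle a).trans ?_))
    exact ENNReal.rpow_le_rpow (enorm_add_le _ _) hq0.le
  have hφle' (a : α) : φ a ≤ (f' a + ‖g a‖ₑ) ^ q :=
    (ENNReal.rpow_inv_le_iff hq0).1 le_tsub_add
  calc eLpNorm' (f + g) q μ = (∫⁻ a, φ a ∂μ) ^ (1 / q) := by rw [eLpNorm', hφeq]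
    _ ≤ (∫⁻ a, (f' a + ‖g a‖ₑ) ^ q ∂μ) ^ (1 / q) := by gcongr with a; exact hφle' a
    _ ≤ (∫⁻ a, f' a ^ q ∂μ) ^ (1 / q) + eLpNorm' g q μ :=
      ENNReal.lintegral_Lp_add_le hf' hg.enorm hq
    _ ≤ eLpNorm' f q μ + eLpNorm' g q μ := by
      unfold eLpNorm'; gcongr with a; exact hf'le a

theorem eLpNorm_add_le_of_aestronglyMeasurable_right (hg : AEStronglyMeasurable g μ)
    (hp : 1 ≤ p) : eLpNorm (f + g) p μ ≤ eLpNorm f p μ + eLpNorm g p μ := by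
  obtain rfl | hp_top := eq_or_ne p ∞
  · simpa using eLpNormEssSup_add_le
  have hp0 : p ≠ 0 := (zero_lt_one.trans_le hp).ne'
  simp only [eLpNorm_eq_eLpNorm' hp0 hp_top]
  exact eLpNorm'_add_le_of_aestronglyMeasurable_right hg
    (by simpa using ENNReal.toReal_mono hp_top hp)

theorem eLpNorm_le_of_tendsto_eLpNorm_sub {ι : Type*} {l : Filter ι} [l.NeBot]
    {h : ι → α → E} {C : ℝ≥0∞} (hp : 1 ≤ p) (hh : ∀ i, AEStronglyMeasurable (h i) μ)
    (hlim : Tendsto (fun i => eLpNorm (f - h i) p μ) l (𝓝 0))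
    (hC : ∀ᶠ i in l, eLpNorm (h i) p μ ≤ C) : eLpNorm f p μ ≤ C := by
  refine ge_of_tendsto (by simpa using hlim.add_const C) (hC.mono fun i hi => ?_)
  calc eLpNorm f p μ = eLpNorm (f - h i + h i) p μ := by rw [sub_add_cancel]
    _ ≤ eLpNorm (f - h i) p μ + eLpNorm (h i) p μ :=
      eLpNorm_add_le_of_aestronglyMeasurable_right (hh i) hp
    _ ≤ eLpNorm (f - h i) p μ + C := by gcongr

end TriangleInequality

section Real

theorem eLpNorm_two_sq_eq_lintegral (f : α → ℝ) :
    eLpNorm f 2 μ ^ 2 = ∫⁻ x, ENNReal.ofReal (f x ^ 2) ∂μ := by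
  have := eLpNorm_nnreal_pow_eq_lintegral (μ := μ) (f := f) (p := 2) two_ne_zero
  simp only [NNReal.coe_ofNat, ENNReal.coe_ofNat, ENNReal.rpow_ofNat] at this
  rw [this]
  congr 1 with x
  rw [Real.enorm_eq_ofReal_abs, ← ENNReal.ofReal_pow (abs_nonneg _), sq_abs]

theorem toReal_eLpNorm_two_sq {f : α → ℝ} (hf : Integrable (fun x => f x ^ 2) μ) :
    (eLpNorm f 2 μ).toReal ^ 2 = ∫ x, f x ^ 2 ∂μ := by
  rw [← ENNReal.toReal_pow, eLpNorm_two_sq_eq_lintegral,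
    integral_eq_lintegral_of_nonneg_ae (.of_forall fun x => sq_nonneg _) hf.1]

theorem integral_sq_le_toReal_eLpNorm_two_sq (f : α → ℝ) :
    ∫ x, f x ^ 2 ∂μ ≤ (eLpNorm f 2 μ).toReal ^ 2 := by
  by_cases hf : Integrable (fun x => f x ^ 2) μ
  · exact (toReal_eLpNorm_two_sq hf).ge
  · rw [integral_undef hf]
    positivity

theorem integral_sq_le_of_tendsto {ι : Type*} {l : Filter ι} [l.NeBot] {f : α → ℝ}
    {h : ι → α → ℝ} {C : ℝ} (hh : ∀ i, MemLp (h i) 2 μ)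
    (hlim : Tendsto (fun i => eLpNorm (f - h i) 2 μ) l (𝓝 0))
    (hC : ∀ᶠ i in l, ∫ x, h i x ^ 2 ∂μ ≤ C) : ∫ x, f x ^ 2 ∂μ ≤ C := by
  have hC' : ∀ᶠ i in l, eLpNorm (h i) 2 μ ≤ ENNReal.ofReal √C := hC.mono fun i hi => by
    rw [← ENNReal.ofReal_toReal (hh i).eLpNorm_ne_top,
      ← Real.sqrt_sq ENNReal.toReal_nonneg, toReal_eLpNorm_two_sq (hh i).integrable_sq]
    gcongr
  have hf := eLpNorm_le_of_tendsto_eLpNorm_sub one_le_two (fun i => (hh i).1) hlim hC'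
  obtain ⟨i, hi⟩ := hC.exists
  have hC0 : 0 ≤ C := (integral_nonneg fun x => sq_nonneg (h i x)).trans hi
  calc ∫ x, f x ^ 2 ∂μ ≤ (eLpNorm f 2 μ).toReal ^ 2 := integral_sq_le_toReal_eLpNorm_two_sq f
    _ ≤ √C ^ 2 := by gcongr; exact ENNReal.toReal_le_of_le_ofReal (Real.sqrt_nonneg C) hf
    _ = C := Real.sq_sqrt hC0

end Real

section Orthogonal

variable {ι : Type*} {u : ι → α → ℝ} {g : α → ℝ}

theorem integral_mul_finset_sum (hg : MemLp g 2 μ) (hu : ∀ j, MemLp (u j) 2 μ) (a : ι → ℝ)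
    (s : Finset ι) :
    ∫ x, g x * ∑ j ∈ s, a j * u j x ∂μ = ∑ j ∈ s, a j * ∫ x, g x * u j x ∂μ := by
  simp_rw [Finset.mul_sum, mul_left_comm (g _)]
  rw [integral_finsetSum s fun j _ => ?_]
  · simp_rw [integral_const_mul]
  · exact (hg.integrable_mul (hu j)).const_mul (a j)

variable [DecidableEq ι] {A : ℝ}

theorem integral_finset_sum_mul_of_orthogonal (hu : ∀ j, MemLp (u j) 2 μ)
    (huu : ∀ i j, ∫ x, u i x * u j x ∂μ = if i = j then A else 0) (a : ι → ℝ)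
    (s : Finset ι) (i : ι) :
    ∫ x, (∑ j ∈ s, a j * u j x) * u i x ∂μ = if i ∈ s then A * a i else 0 := by
  simp_rw [mul_comm _ (u i _), integral_mul_finset_sum (hu i) hu]
  simp [huu, mul_comm]

theorem integral_sq_finset_sum_of_orthogonal (hu : ∀ j, MemLp (u j) 2 μ)
    (huu : ∀ i j, ∫ x, u i x * u j x ∂μ = if i = j then A else 0) (a : ι → ℝ)
    (s : Finset ι) :
    ∫ x, (∑ j ∈ s, a j * u j x) ^ 2 ∂μ = A * ∑ j ∈ s, a j ^ 2 := by
  have hS : MemLp (fun x => ∑ j ∈ s, a j * u j x) 2 μ :=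
    memLp_finsetSum s fun j _ => (hu j).const_mul (a j)
  simp_rw [sq, integral_mul_finset_sum hS hu, integral_finset_sum_mul_of_orthogonal hu huu,
    Finset.mul_sum]
  exact Finset.sum_congr rfl fun j hj => by rw [if_pos hj]; ring

theorem integral_sq_sub_finset_sum_of_orthogonal (hg : MemLp g 2 μ)
    (hu : ∀ j, MemLp (u j) 2 μ) (huu : ∀ i j, ∫ x, u i x * u j x ∂μ = if i = j then A else 0)
    {a : ι → ℝ} (hgu : ∀ j, ∫ x, g x * u j x ∂μ = A * a j) (s : Finset ι) :
    ∫ x, (g x - ∑ j ∈ s, a j * u j x) ^ 2 ∂μ = ∫ x, g x ^ 2 ∂μ - A * ∑ j ∈ s, a j ^ 2 := by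
  have hS : MemLp (fun x => ∑ j ∈ s, a j * u j x) 2 μ :=
    memLp_finsetSum s fun j _ => (hu j).const_mul (a j)
  have hgS : ∫ x, g x * ∑ j ∈ s, a j * u j x ∂μ = A * ∑ j ∈ s, a j ^ 2 := by
    simp_rw [integral_mul_finset_sum hg hu, hgu, Finset.mul_sum]
    exact Finset.sum_congr rfl fun j _ => by ring
  have hexpand : (fun x => (g x - ∑ j ∈ s, a j * u j x) ^ 2) = fun x =>
      g x ^ 2 - 2 * (g x * ∑ j ∈ s, a j * u j x) + (∑ j ∈ s, a j * u j x) ^ 2 := by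
    ext x; ring
  rw [hexpand, integral_add _ hS.integrable_sq, integral_sub hg.integrable_sq,
    integral_const_mul, hgS, integral_sq_finset_sum_of_orthogonal hu huu]
  · ring
  · exact (hg.integrable_mul hS).const_mul 2
  · exact hg.integrable_sq.sub ((hg.integrable_mul hS).const_mul 2)

theorem mul_sum_sdiff_sq_le_integral_sq_sub (hg : MemLp g 2 μ)
    (hu : ∀ j, MemLp (u j) 2 μ) (huu : ∀ i j, ∫ x, u i x * u j x ∂μ = if i = j then A else 0)
    {a : ι → ℝ} (hgu : ∀ j, ∫ x, g x * u j x ∂μ = A * a j) {s t : Finset ι} (hst : s ⊆ t) :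
    A * ∑ j ∈ t \ s, a j ^ 2 ≤ ∫ x, (g x - ∑ j ∈ s, a j * u j x) ^ 2 ∂μ := by
  have ht := integral_sq_sub_finset_sum_of_orthogonal hg hu huu hgu t
  have ht0 : 0 ≤ ∫ x, (g x - ∑ j ∈ t, a j * u j x) ^ 2 ∂μ :=
    integral_nonneg fun x => sq_nonneg _
  rw [← Finset.sum_sdiff hst, mul_add] at ht
  rw [integral_sq_sub_finset_sum_of_orthogonal hg hu huu hgu s]
  linarith

end Orthogonal

section Truncation

variable {β : Type*} [MeasurableSpace β] {ν : Measure β}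
  {g : β → ℝ} {w : ℕ → β → ℝ} {ℓ : ℕ → α → ℝ} {A : ℝ} {c r : ℕ → ℝ}

theorem integral_sq_sum_sdiff_range_le (hA : 0 < A) (hr : Antitone r) (hr0 : ∀ j, 0 ≤ r j)
    (hg : MemLp g 2 ν) (hw : ∀ j, MemLp (w j) 2 ν)
    (hww : ∀ i j, ∫ z, w i z * w j z ∂ν = if i = j then A else 0)
    (hgw : ∀ j, ∫ z, g z * w j z ∂ν = A * c j) (hℓ : ∀ j, MemLp (ℓ j) 2 μ)
    (hℓℓ : ∀ i j, ∫ x, ℓ i x * ℓ j x ∂μ = if i = j then 1 else 0) {M K : ℕ} (hMK : M ≤ K) :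
    ∫ x, (∑ j ∈ Finset.range K \ Finset.range M, √(r j) * c j * ℓ j x) ^ 2 ∂μ
      ≤ r M * (A⁻¹ * ∫ z, (g z - ∑ j ∈ Finset.range M, c j * w j z) ^ 2 ∂ν) := by
  have hbessel := mul_sum_sdiff_sq_le_integral_sq_sub hg hw hww hgw
    (Finset.range_subset_range.2 hMK)
  rw [integral_sq_finset_sum_of_orthogonal hℓ hℓℓ, one_mul]
  calc ∑ j ∈ Finset.range K \ Finset.range M, (√(r j) * c j) ^ 2
      = ∑ j ∈ Finset.range K \ Finset.range M, r j * c j ^ 2 := by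
        simp_rw [mul_pow, Real.sq_sqrt (hr0 _)]
    _ ≤ ∑ j ∈ Finset.range K \ Finset.range M, r M * c j ^ 2 := by
        gcongr with j hj
        exact hr (by simpa using (Finset.mem_sdiff.1 hj).2)
    _ ≤ r M * (A⁻¹ * ∫ z, (g z - ∑ j ∈ Finset.range M, c j * w j z) ^ 2 ∂ν) := by
        rw [← Finset.mul_sum, inv_mul_eq_div]
        exact mul_le_mul_of_nonneg_left ((le_div_iff₀' hA).2 hbessel) (hr0 M)

theorem integral_sq_sub_sum_range_le_of_tendsto (hA : 0 < A) (hr : Antitone r)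
    (hr0 : ∀ j, 0 ≤ r j) (hg : MemLp g 2 ν) (hw : ∀ j, MemLp (w j) 2 ν)
    (hww : ∀ i j, ∫ z, w i z * w j z ∂ν = if i = j then A else 0)
    (hgw : ∀ j, ∫ z, g z * w j z ∂ν = A * c j) (hℓ : ∀ j, MemLp (ℓ j) 2 μ)
    (hℓℓ : ∀ i j, ∫ x, ℓ i x * ℓ j x ∂μ = if i = j then 1 else 0) {F : α → ℝ}
    (hF : Tendsto (fun K => eLpNorm (fun x => F x - ∑ j ∈ Finset.range K, √(r j) * c j * ℓ j x)
      2 μ) atTop (𝓝 0)) (M : ℕ) :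
    ∫ x, (F x - ∑ j ∈ Finset.range M, √(r j) * c j * ℓ j x) ^ 2 ∂μ
      ≤ r M * (A⁻¹ * ∫ z, (g z - ∑ j ∈ Finset.range M, c j * w j z) ^ 2 ∂ν) := by
  set s : ℕ → α → ℝ := fun K x => ∑ j ∈ Finset.range K, √(r j) * c j * ℓ j x
  have hs (K : ℕ) : MemLp (s K) 2 μ :=
    memLp_finsetSum _ fun j _ => (hℓ j).const_mul _
  refine integral_sq_le_of_tendsto (h := fun K x => s K x - s M x)
    (fun K => (hs K).sub (hs M)) (hF.congr fun K => ?_) ?_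
  · congr 1 with x
    simp only [Pi.sub_apply]
    ring
  · filter_upwards [eventually_ge_atTop M] with K hK
    simp_rw [s, ← Finset.sum_sdiff_eq_sub (Finset.range_subset_range.2 hK)]
    exact integral_sq_sum_sdiff_range_le hA hr hr0 hg hw hww hgw hℓ hℓℓ hK

end Truncation

end MeasureTheory

namespace B1Setting

variable (S : B1Setting N)

theorem area_nonneg : 0 ≤ S.area :=
  ENNReal.toReal_nonneg

theorem bM_nonneg (f : H0DFun S.Ω) : 0 ≤ S.bM f :=
  integral_nonneg fun _ => sq_nonneg _

theorem pos_of_mul_bM_eq_one {q : ℝ} {f : H0DFun S.Ω} (h : q * S.bM f = 1) : 0 < q :=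
  pos_of_mul_pos_left (h ▸ one_pos) (S.bM_nonneg f)

theorem area_pos_of_mul_bM_eq_one {q : ℝ} {f : H0DFun S.Ω} (h : q * S.bM f = 1) :
    0 < S.area := by
  refine ENNReal.toReal_pos (fun h0 => ?_) S.fin_bdry.ne
  rw [Measure.measure_univ_eq_zero] at h0
  simp [bM, h0] at h

theorem integral_sqrt_mul_dnu_mul_of_isDBS {ι : Type*} [DecidableEq ι] {q : ι → ℝ}
    {b : ι → H0DFun S.Ω} (hDBS : ∀ j, S.IsDBS (q j) (b j)) (hq : ∀ j, 0 < q j)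
    (hON : ∀ i j, lapIP (b i) (b j) = if i = j then 1 else 0) (i j : ι) :
    ∫ z, √(q i * S.area) * S.dnu (b i) z * (√(q j * S.area) * S.dnu (b j) z) ∂(surf S.Ω)
      = if i = j then S.area else 0 := by
  have hij : q i * ∫ z, S.dnu (b i) z * S.dnu (b j) z ∂(surf S.Ω) = if i = j then 1 else 0 :=
    ((hDBS i).2 (b j)).symm.trans (hON i j)
  simp_rw [mul_mul_mul_comm, integral_const_mul]
  split_ifs at hij ⊢ with h
  · subst h
    rw [Real.mul_self_sqrt (mul_nonneg (hq i).le S.area_nonneg)]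
    linear_combination S.area * hij
  · rw [(mul_eq_zero.1 hij).resolve_left (hq i).ne', mul_zero]

end B1Setting

theorem statement_17_general {N : ℕ} (S : B1Setting N)
    (q : ℕ → ℝ) (b : ℕ → H0DFun S.Ω)
    (hDBS : ∀ j, S.IsDBS (q j) (b j))
    (hmono : Monotone q)
    (hON : ∀ i j, lapIP (b i) (b j) = if i = j then 1 else 0)
    (hq : ∀ j, q j * S.bM (b j) = 1)
    (w : ℕ → Euc N → ℝ)
    (hw : ∀ j z, w j z = Real.sqrt (q j * S.area) * S.dnu (b j) z)
    (EH : (Euc N → ℝ) → Euc N → ℝ)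
    (hEH : ∀ g : Euc N → ℝ, MemLp g 2 (surf S.Ω) →
      Tendsto (fun M => eLpNorm (fun x => EH g x -
          Real.sqrt S.area * ∑ j ∈ Finset.range M,
            (((S.area)⁻¹ * ∫ z, g z * w j z ∂(surf S.Ω)) / Real.sqrt (q j))
              * (b j).lap x)
        2 (volΩ S.Ω)) atTop (𝓝 0))
    (g : Euc N → ℝ) (hg : MemLp g 2 (surf S.Ω)) (M : ℕ) :
    Real.sqrt (∫ x in S.Ω, (EH g x -
        ∫ z, (∑ j ∈ Finset.range M,
          (Real.sqrt (S.area * q j))⁻¹ * (b j).lap x * w j z) * g z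
          ∂(surf S.Ω)) ^ 2)
      ≤ Real.sqrt (S.area / q M) *
        Real.sqrt ((S.area)⁻¹ * ∫ z, (g z - ∑ j ∈ Finset.range M,
          ((S.area)⁻¹ * ∫ y, g y * w j y ∂(surf S.Ω)) * w j z) ^ 2 ∂(surf S.Ω)) := by
  set A := S.area
  have hA : 0 < A := S.area_pos_of_mul_bM_eq_one (hq 0)
  have hqpos (j : ℕ) : 0 < q j := S.pos_of_mul_bM_eq_one (hq j)
  have hwL2 (j : ℕ) : MemLp (w j) 2 (surf S.Ω) := by
    rw [show w j = _ from funext (hw j)]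
    exact (S.dnu_mem (b j)).const_mul _
  have hww (i j : ℕ) : ∫ z, w i z * w j z ∂(surf S.Ω) = if i = j then A else 0 := by
    simp only [hw]
    exact S.integral_sqrt_mul_dnu_mul_of_isDBS hDBS hqpos hON i j
  set c : ℕ → ℝ := fun j => A⁻¹ * ∫ z, g z * w j z ∂(surf S.Ω)
  have hgw (j : ℕ) : ∫ z, g z * w j z ∂(surf S.Ω) = A * c j :=
    (mul_inv_cancel_left₀ hA.ne' _).symm
  have hEM (x : Euc N) : ∫ z, (∑ j ∈ Finset.range M, (√(A * q j))⁻¹ * (b j).lap x * w j z)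
      * g z ∂(surf S.Ω) = ∑ j ∈ Finset.range M, √(A / q j) * c j * (b j).lap x := by
    simp_rw [mul_comm _ (g _), integral_mul_finset_sum hg hwL2, hgw,
      ← Real.inv_sqrt_mul_mul_eq_sqrt_div hA.le]
    exact Finset.sum_congr rfl fun j _ => by ring
  have hEH' : Tendsto (fun K => eLpNorm (fun x => EH g x - ∑ j ∈ Finset.range K,
      √(A / q j) * c j * (b j).lap x) 2 (volΩ S.Ω)) atTop (𝓝 0) := by
    refine (hEH g hg).congr fun K => ?_
    simp_rw [Finset.mul_sum, Real.sqrt_div hA.le]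
    congr 1 with x
    exact congrArg _ (Finset.sum_congr rfl fun j _ => by ring)
  have key := integral_sq_sub_sum_range_le_of_tendsto (r := fun j => A / q j) hA
    (fun i j hij => div_le_div_of_nonneg_left hA.le (hqpos i) (hmono hij))
    (fun j => (div_pos hA (hqpos j)).le) hg hwL2 hww hgw (fun j => (b j).lap_mem) hON hEH' M
  simp_rw [hEM]
  rw [← Real.sqrt_mul (div_pos hA (hqpos M)).le]
  exact Real.sqrt_le_sqrt key

/-- Theorem 7.3: under (B2), the rank-`M` approximation
`E_M g (x) = ∫_∂Ω P_M(x,z) g(z) dσ(z)` of the harmonic extension operator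
satisfies `‖E_H g - E_M g‖ ≤ √(|∂Ω|/q_{M+1}) ‖g - g_M‖_{∂Ω}`. -/
theorem statement_17 {N : ℕ} (hN : 2 ≤ N) (S : B1Setting N) (hB2 : S.B2)
    (q : ℕ → ℝ) (b : ℕ → H0DFun S.Ω)
    (hDBS : ∀ j, S.IsDBS (q j) (b j))
    (hmono : Monotone q)
    (hON : ∀ i j, lapIP (b i) (b j) = if i = j then 1 else 0)
    (hq : ∀ j, q j * S.bM (b j) = 1)
    (halg : ∀ k, ∀ u : H0DFun S.Ω, deltaNormSq u ≤ 1 →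
      (∀ j, j < k → lapIP u (b j) = 0) → S.bM u ≤ S.bM (b k))
    (w : ℕ → Euc N → ℝ)
    (hw : ∀ j z, w j z = Real.sqrt (q j * S.area) * S.dnu (b j) z)
    (EH : (Euc N → ℝ) → Euc N → ℝ)
    (hEH : ∀ g : Euc N → ℝ, MemLp g 2 (surf S.Ω) →
      Tendsto (fun M => eLpNorm (fun x => EH g x -
          Real.sqrt S.area * ∑ j ∈ Finset.range M,
            (((S.area)⁻¹ * ∫ z, g z * w j z ∂(surf S.Ω)) / Real.sqrt (q j))
              * (b j).lap x)
        2 (volΩ S.Ω)) atTop (𝓝 0))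
    (g : Euc N → ℝ) (hg : MemLp g 2 (surf S.Ω)) (M : ℕ) :
    Real.sqrt (∫ x in S.Ω, (EH g x -
        ∫ z, (∑ j ∈ Finset.range M,
          (Real.sqrt (S.area * q j))⁻¹ * (b j).lap x * w j z) * g z
          ∂(surf S.Ω)) ^ 2)
      ≤ Real.sqrt (S.area / q M) *
        Real.sqrt ((S.area)⁻¹ * ∫ z, (g z - ∑ j ∈ Finset.range M,
          ((S.area)⁻¹ * ∫ y, g y * w j y ∂(surf S.Ω)) * w j z) ^ 2 ∂(surf S.Ω)) :=
  statement_17_general S q b hDBS hmono hON hq w hw EH hEH g hg M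

end
end
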